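/- Let Γ be finitely generated and residually finite, and 1 → ℤ → Γ̃ → Γ → 1 a central exact sequence with kernel generated by σ. For each d ∈ ℕ let Γ_d be the central extension 1 → ℤ/d → Γ_d → Γ → 1 obtained as the quotient Γ̃/⟨σ^d⟩. If there is a nilpotent quotient of Γ̃ that is injective on ⟨σ⟩, then Γ_d is residually finite for all d. -/

import Mathlib

/-- A group is residually finite if every nontrivial element survives in some
finite quotient. -/
def ResiduallyFinite (G : Type*) [Group G] : Prop :=
  ∀ g : G, g ≠ 1 → ∃ (F : Type) (_ : Group F) (_ : Finite F) (ρ : G →* F), ρ g ≠ 1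

/-!
A nontrivial element of `Γ_d = Γ̃/⟨σ^d⟩` either survives in `Γ`, which is residually finite, or
lies in `⟨σ⟩/⟨σ^d⟩`, on which the map to `N/ρ⟨σ^d⟩` is injective. The latter group is finitely
generated and nilpotent, hence residually finite: if `M` is maximal among the normal subgroups
avoiding `x ≠ 1`, then `x` lies in every nontrivial normal subgroup of `G/M`; so an element of
infinite order in the centre cannot exist (`x` would be a power of `y^k` for every `k ≠ 0`), and a
finitely generated nilpotent group with torsion centre is finite, because the terms of its lower
central series are finitely generated.
-/

open Subgroup
open scoped commutatorElement

section Commutators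

variable {G : Type*} [Group G]

theorem Subgroup.normal_of_le_center {H : Subgroup G} (h : H ≤ center G) : H.Normal :=
  ⟨fun n hn g => by rw [mem_center_iff.mp (h hn) g, mul_inv_cancel_right]; exact hn⟩

theorem commutatorElement_mul_left_of_mem_center {a b c : G} (h : ⁅b, c⁆ ∈ center G) :
    ⁅a * b, c⁆ = ⁅b, c⁆ * ⁅a, c⁆ := by
  rw [commutatorElement_mul_left_eq_conj_mul, mem_center_iff.mp h a, mul_inv_cancel_right]

theorem commutatorElement_mul_right_of_mem_center {a b c : G} (h : ⁅a, c⁆ ∈ center G) :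
    ⁅a, b * c⁆ = ⁅a, b⁆ * ⁅a, c⁆ := by
  rw [commutatorElement_mul_right_eq_mul_conj, mul_assoc _ b, mem_center_iff.mp h b,
    mul_assoc, mul_inv_cancel_right]

theorem commutatorElement_inv_left_of_mem_center {a b : G} (h : ⁅a, b⁆ ∈ center G) :
    ⁅a⁻¹, b⁆ = ⁅a, b⁆⁻¹ := by
  rw [commutatorElement_inv_left, ← commutatorElement_inv,
    mem_center_iff.mp (inv_mem h) a⁻¹, inv_mul_cancel_right]

theorem commutatorElement_inv_right_of_mem_center {a b : G} (h : ⁅a, b⁆ ∈ center G) :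
    ⁅a, b⁻¹⁆ = ⁅a, b⁆⁻¹ := by
  rw [commutatorElement_inv_right, ← commutatorElement_inv,
    mem_center_iff.mp (inv_mem h) b⁻¹, inv_mul_cancel_right]

theorem commutatorElement_pow_left_of_mem_center {a b : G} (h : ⁅a, b⁆ ∈ center G) (n : ℕ) :
    ⁅a ^ n, b⁆ = ⁅a, b⁆ ^ n := by
  induction n with
  | zero => simp
  | succ n ih =>
    rw [pow_succ', commutatorElement_mul_left_of_mem_center (ih ▸ pow_mem h n), ih, pow_succ]

theorem commutator_closure_le_closure_image2 {S T : Set G}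
    (h : ⁅closure S, closure T⁆ ≤ center G) :
    ⁅closure S, closure T⁆ ≤ closure (Set.image2 (⁅·, ·⁆) S T) := by
  have hc : ∀ a ∈ closure S, ∀ b ∈ closure T, ⁅a, b⁆ ∈ center G :=
    fun a ha b hb => h (commutator_mem_commutator ha hb)
  rw [commutator_le]
  intro a ha b hb
  induction hb using closure_induction with
  | mem t ht =>
    induction ha using closure_induction with
    | mem s hs => exact subset_closure (Set.mem_image2_of_mem hs ht)
    | one => simp
    | mul x y hx hy ihx ihy =>
      rw [commutatorElement_mul_left_of_mem_center (hc y hy t (subset_closure ht))]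
      exact mul_mem ihy ihx
    | inv x hx ih =>
      rw [commutatorElement_inv_left_of_mem_center (hc x hx t (subset_closure ht))]
      exact inv_mem ih
  | one => simp
  | mul x y hx hy ihx ihy =>
    rw [commutatorElement_mul_right_of_mem_center (hc a ha y hy)]
    exact mul_mem ihx ihy
  | inv x hx ih =>
    rw [commutatorElement_inv_right_of_mem_center (hc a ha x hx)]
    exact inv_mem ih

end Commutators

section FiniteGeneration

variable {G H : Type*} [Group G] [Group H]

theorem Group.fg_of_surjective_of_ker_fg [Group.FG H] {f : G →* H}
    (hf : Function.Surjective f) (hker : f.ker.FG) : Group.FG G := by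
  obtain ⟨S, hS, hSfin⟩ := Group.fg_iff.mp ‹Group.FG H›
  obtain ⟨T, hT, hTfin⟩ := (Subgroup.fg_iff _).mp hker
  let C := closure (Function.surjInv hf '' S ∪ T)
  have hmap : C.map f = ⊤ := by
    rw [MonoidHom.map_closure, Set.image_union, Set.image_image, eq_top_iff, ← hS]
    simp only [Function.surjInv_eq hf, Set.image_id']
    exact closure_mono Set.subset_union_left
  have hkerC : f.ker ≤ C := hT ▸ closure_mono Set.subset_union_right
  refine Group.fg_iff.mpr ⟨Function.surjInv hf '' S ∪ T, ?_, (hSfin.image _).union hTfin⟩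
  change C = ⊤
  rw [← sup_of_le_left hkerC, ← comap_map_eq, hmap, comap_top]

theorem Subgroup.exists_finite_le_closure_sup_ker (f : G →* H) {A : Subgroup G}
    (hA : (A.map f).FG) : ∃ T : Set G, T.Finite ∧ T ⊆ A ∧ A ≤ closure T ⊔ f.ker := by
  obtain ⟨U, hU, hUfin⟩ := (Subgroup.fg_iff _).mp hA
  obtain ⟨T, hTA, hTfin, hTU⟩ :=
    Set.exists_subset_image_finite_and (p := fun V => closure V = A.map f).mp
      ⟨U, hU ▸ subset_closure, hUfin, hU⟩
  refine ⟨T, hTfin, hTA, fun a ha => ?_⟩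
  rw [← SetLike.mem_coe, ← comap_map_eq, coe_comap, Set.mem_preimage, MonoidHom.map_closure,
    hTU]
  exact mem_map_of_mem f ha

theorem Subgroup.commutator_top_fg_of_le_closure_sup [Group.FG G] {A : Subgroup G} [A.Normal]
    {T : Set G} (hT : T.Finite) (hTA : T ⊆ A) (hA : A ≤ closure T ⊔ ⁅A, ⊤⁆)
    (hc : ⁅A, (⊤ : Subgroup G)⁆ ≤ center G) : ⁅A, (⊤ : Subgroup G)⁆.FG := by
  obtain ⟨S, hS, hSfin⟩ := Group.fg_iff.mp ‹Group.FG G›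
  set D := ⁅A, (⊤ : Subgroup G)⁆
  have hAgen : closure (T ∪ D) = A := by
    rw [closure_union, closure_eq]
    exact le_antisymm (sup_le (closure_le _ |>.mpr hTA) (commutator_le_left A ⊤)) hA
  have hDV : D ≤ closure (Set.image2 (⁅·, ·⁆) T S) :=
    calc D = ⁅closure (T ∪ D), closure S⁆ := by rw [hAgen, hS]
      _ ≤ closure (Set.image2 (⁅·, ·⁆) (T ∪ D) S) :=
        commutator_closure_le_closure_image2 (by rwa [hAgen, hS])
      _ ≤ closure (Set.image2 (⁅·, ·⁆) T S) := by
        refine closure_le _ |>.mpr ?_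
        rintro _ ⟨t, ht | ht, s, hs, rfl⟩
        · exact subset_closure ⟨t, ht, s, hs, rfl⟩
        · change ⁅t, s⁆ ∈ _
          rw [commutatorElement_eq_one_iff_mul_comm.mpr (mem_center_iff.mp (hc ht) s).symm]
          exact one_mem _
  have hVD : closure (Set.image2 (⁅·, ·⁆) T S) ≤ D := closure_le _ |>.mpr <| by
    rintro _ ⟨t, ht, s, -, rfl⟩
    exact commutator_mem_commutator (hTA ht) (mem_top s)
  exact (Subgroup.fg_iff _).mpr ⟨_, le_antisymm hVD hDV, hT.image2 _ hSfin⟩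

end FiniteGeneration

section LowerCentralSeries

variable {G H : Type*} [Group G] [Group H]

theorem Subgroup.map_top_lowerCentralSeries_of_surjective {f : G →* H}
    (hf : Function.Surjective f) (n : ℕ) :
    ((⊤ : Subgroup G).lowerCentralSeries n).map f = (⊤ : Subgroup H).lowerCentralSeries n := by
  rw [map_lowerCentralSeries, map_top_of_surjective f hf]

theorem Subgroup.lowerCentralSeries_quotient_eq_bot {D : Subgroup G} [D.Normal] {n : ℕ}
    (h : (⊤ : Subgroup G).lowerCentralSeries n ≤ D) :
    (⊤ : Subgroup (G ⧸ D)).lowerCentralSeries n = ⊥ := by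
  rwa [← map_top_lowerCentralSeries_of_surjective (QuotientGroup.mk'_surjective D),
    map_eq_bot_iff, QuotientGroup.ker_mk']

theorem Subgroup.lowerCentralSeries_le_center {n : ℕ}
    (h : (⊤ : Subgroup G).lowerCentralSeries (n + 1) = ⊥) :
    (⊤ : Subgroup G).lowerCentralSeries n ≤ center G :=
  commutator_top_right_eq_bot_iff_le_center.mp h

theorem Subgroup.lowerCentralSeries_fg [Group.FG G] {c : ℕ}
    (h : (⊤ : Subgroup G).lowerCentralSeries (c + 1) = ⊥) :
    ((⊤ : Subgroup G).lowerCentralSeries c).FG := by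
  induction c generalizing G with
  | zero => exact Group.fg_def.mp ‹_›
  | succ c ih =>
    set D := (⊤ : Subgroup G).lowerCentralSeries (c + 1)
    have hQ := ih (G := G ⧸ D) (lowerCentralSeries_quotient_eq_bot le_rfl)
    rw [← map_top_lowerCentralSeries_of_surjective (QuotientGroup.mk'_surjective D)] at hQ
    obtain ⟨T, hTfin, hTA, hA⟩ := exists_finite_le_closure_sup_ker _ hQ
    rw [QuotientGroup.ker_mk'] at hA
    exact commutator_top_fg_of_le_closure_sup hTfin hTA hA (lowerCentralSeries_le_center h)

end LowerCentralSeries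

section TorsionCenter

variable {G : Type*} [Group G]

theorem Subgroup.finite_of_fg_of_le_center {D : Subgroup G} (hfg : D.FG) (hD : D ≤ center G)
    (htor : ∀ y ∈ D, IsOfFinOrder y) : Finite D := by
  let _ : CommGroup D :=
    { mul_comm := fun a b => Subtype.ext (mem_center_iff.mp (hD a.2) b).symm }
  have : Group.FG D := (Group.fg_iff_subgroup_fg D).mpr hfg
  exact CommGroup.finite_of_fg_isMulTorsion D fun a =>
    D.subtype_injective.isOfFinOrder_iff.mp (htor a a.2)

theorem isOfFinOrder_of_mem_center_quotient {D : Subgroup G} [D.Normal] [Finite D]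
    (hD : D ≤ center G) (htor : ∀ y ∈ center G, IsOfFinOrder y) :
    ∀ y ∈ center (G ⧸ D), IsOfFinOrder y := by
  intro y' hy'
  obtain ⟨y, rfl⟩ := QuotientGroup.mk'_surjective D y'
  have hyD : ∀ g, ⁅y, g⁆ ∈ D := fun g => by
    rw [← QuotientGroup.ker_mk' D, MonoidHom.mem_ker, map_commutatorElement,
      commutatorElement_eq_one_iff_mul_comm, mem_center_iff.mp hy']
  have hpow : y ^ Nat.card D ∈ center G := mem_center_iff.mpr fun g => by
    rw [eq_comm, ← commutatorElement_eq_one_iff_mul_comm,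
      commutatorElement_pow_left_of_mem_center (hD (hyD g))]
    exact congrArg Subtype.val (pow_card_eq_one' (x := (⟨_, hyD g⟩ : D)))
  exact (QuotientGroup.mk' D).isOfFinOrder ((htor _ hpow).of_pow Nat.card_pos.ne')

theorem finite_of_lowerCentralSeries_eq_bot_of_isOfFinOrder [Group.FG G] {c : ℕ}
    (hc : (⊤ : Subgroup G).lowerCentralSeries c = ⊥)
    (htor : ∀ y ∈ center G, IsOfFinOrder y) : Finite G := by
  induction c generalizing G with
  | zero =>
    have := Subgroup.subsingleton_iff.mp (subsingleton_iff_bot_eq_top.mp hc.symm)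
    exact Finite.of_subsingleton
  | succ c ih =>
    set D := (⊤ : Subgroup G).lowerCentralSeries c
    have hD : D ≤ center G := lowerCentralSeries_le_center hc
    have : Finite D :=
      finite_of_fg_of_le_center (lowerCentralSeries_fg hc) hD fun y hy => htor y (hD hy)
    have : Finite (G ⧸ D) :=
      ih (lowerCentralSeries_quotient_eq_bot le_rfl) (isOfFinOrder_of_mem_center_quotient hD htor)
    exact Finite.of_subgroup_quotient D

end TorsionCenter

section ResidualFiniteness

variable {G : Type*} [Group G]

theorem Subgroup.exists_maximal_normal_notMem {x : G} (hx : x ≠ 1) :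
    ∃ M : Subgroup G, Maximal (fun K : Subgroup G => K.Normal ∧ x ∉ K) M := by
  have hchain : ∀ c ⊆ {K : Subgroup G | K.Normal ∧ x ∉ K}, IsChain (· ≤ ·) c →
      ∀ K ∈ c, ∃ U ∈ {K : Subgroup G | K.Normal ∧ x ∉ K}, ∀ L ∈ c, L ≤ U := by
    intro c hcs hc K hK
    refine ⟨sSup c, ⟨sSup_normal c fun L hL => (hcs hL).1, fun hxc => ?_⟩,
      fun L hL => le_sSup hL⟩
    obtain ⟨L, hL, hxL⟩ := (mem_sSup_of_directedOn ⟨K, hK⟩ hc.directedOn).mp hxc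
    exact (hcs hL).2 hxL
  obtain ⟨M, -, hM⟩ := zorn_le_nonempty₀ _ hchain ⊥ ⟨inferInstance, by simpa using hx⟩
  exact ⟨M, hM⟩

theorem isOfFinOrder_of_mem_center_of_forall_mem_normal {x : G} (hx : x ≠ 1)
    (hmin : ∀ N : Subgroup G, N.Normal → N ≠ ⊥ → x ∈ N) {y : G} (hy : y ∈ center G) :
    IsOfFinOrder y := by
  by_contra hinf
  have hinj := injective_zpow_iff_not_isOfFinOrder.mpr hinf
  have hmem : ∀ k : ℤ, k ≠ 0 → ∃ t : ℤ, y ^ (k * t) = x := fun k hk => by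
    have hN := normal_of_le_center (zpowers_le.mpr (zpow_mem hy k))
    have hne : zpowers (y ^ k) ≠ ⊥ := by
      rw [Ne, zpowers_eq_bot]
      exact fun h => hk (hinj (h.trans (zpow_zero y).symm))
    obtain ⟨t, ht⟩ := mem_zpowers_iff.mp (hmin _ hN hne)
    exact ⟨t, by rw [zpow_mul, ht]⟩
  obtain ⟨k, hk⟩ := hmem 1 one_ne_zero
  have hk0 : k ≠ 0 := by rintro rfl; exact hx (by simpa using hk.symm)
  obtain ⟨t, ht⟩ := hmem (2 * k) (by omega)
  have hkt : 1 * k = 2 * k * t := hinj (hk.trans ht.symm)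
  have : k * (2 * t - 1) = 0 := by linear_combination -hkt
  have := (mul_eq_zero.mp this).resolve_left hk0
  omega

instance Group.ResiduallyFinite.of_isNilpotent [Group.FG G] [Group.IsNilpotent G] :
    Group.ResiduallyFinite G := by
  refine Group.residuallyFinite_iff_exists_finiteIndex.mpr fun x hx => ?_
  obtain ⟨M, hM⟩ := exists_maximal_normal_notMem hx
  obtain ⟨hMn, hxM⟩ := hM.prop
  have hmin : ∀ N : Subgroup (G ⧸ M), N.Normal → N ≠ ⊥ → (x : G ⧸ M) ∈ N := by
    intro N hN hne
    by_contra hxN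
    have hle : N.comap (QuotientGroup.mk' M) ≤ M :=
      hM.2 ⟨hN.comap _, hxN⟩ (by simpa using MonoidHom.ker_le_comap (QuotientGroup.mk' M) N)
    refine hne ?_
    rwa [← map_comap_eq_self_of_surjective (QuotientGroup.mk'_surjective M) N,
      Subgroup.map_eq_bot_iff, QuotientGroup.ker_mk']
  have htor : ∀ y ∈ center (G ⧸ M), IsOfFinOrder y := fun _ =>
    isOfFinOrder_of_mem_center_of_forall_mem_normal (mt (QuotientGroup.eq_one_iff x).mp hxM) hmin
  obtain ⟨c, hc⟩ :=
    Subgroup.nilpotent_iff_lowerCentralSeries.mp (inferInstance : Group.IsNilpotent (G ⧸ M))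
  have : Finite (G ⧸ M) := finite_of_lowerCentralSeries_eq_bot_of_isOfFinOrder hc htor
  exact ⟨M, finiteIndex_of_finite_quotient, hxM⟩

theorem residuallyFinite_iff_group_residuallyFinite :
    ResiduallyFinite G ↔ Group.ResiduallyFinite G := by
  refine ⟨Group.residuallyFinite_of_forall_exists_finite_monoidHom, fun _ g hg => ?_⟩
  obtain ⟨H, hgH⟩ := Group.exists_finiteIndexNormalSubgroup_notMem g hg
  let e : G ⧸ H.toSubgroup ≃* Shrink.{0} (G ⧸ H.toSubgroup) := Shrink.mulEquiv.symm
  exact ⟨_, inferInstance, .of_equiv _ e.toEquiv, e.toMonoidHom.comp (QuotientGroup.mk' _),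
    by simpa [FiniteIndexNormalSubgroup.mem_toSubgroup_iff] using hgH⟩

end ResidualFiniteness

section Extensions

variable {E D Q R : Type*} [Group E] [Group D] [Group Q] [Group R]

theorem Group.ResiduallyFinite.of_injOn_ker [Group.ResiduallyFinite Q]
    [Group.ResiduallyFinite R] (f : E →* Q) (h : E →* R)
    (hinj : ∀ x ∈ f.ker, h x = 1 → x = 1) : Group.ResiduallyFinite E := by
  refine Group.residuallyFinite_iff_exists_finiteIndexNormalSubgroup.mpr fun x hx => ?_
  by_cases hfx : f x = 1
  · obtain ⟨K, hK⟩ := Group.exists_finiteIndexNormalSubgroup_notMem (h x) (mt (hinj x hfx) hx)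
    exact ⟨K.comap h, hK⟩
  · obtain ⟨K, hK⟩ := Group.exists_finiteIndexNormalSubgroup_notMem (f x) hfx
    exact ⟨K.comap f, hK⟩

theorem Group.ResiduallyFinite.of_surjective_of_ker_le [Group.ResiduallyFinite Q]
    [Group.FG R] [Group.IsNilpotent R] {q : E →* D} (hq : Function.Surjective q) (π : E →* Q)
    {ρ : E →* R} (hρ : Function.Surjective ρ) (hle : q.ker ≤ π.ker)
    (hinj : ∀ x ∈ π.ker, ρ x = 1 → x = 1) : Group.ResiduallyFinite D := by
  let M := q.ker.map ρ
  have : M.Normal := (inferInstance : q.ker.Normal).map ρ hρ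
  let f := q.liftOfSurjective hq ⟨π, hle⟩
  let h := q.liftOfSurjective hq ⟨(QuotientGroup.mk' M).comp ρ, fun k hk =>
    (QuotientGroup.eq_one_iff _).mpr (mem_map_of_mem ρ hk)⟩
  refine of_injOn_ker f h fun x hfx hhx => ?_
  obtain ⟨g, rfl⟩ := hq x
  have hg : π g = 1 := by simpa [f] using hfx
  have hρg : ρ g ∈ M := by simpa [h] using hhx
  obtain ⟨k, hk, hkg⟩ := mem_map.mp hρg
  have hkg' : k⁻¹ * g = 1 :=
    hinj _ (mul_mem (inv_mem (hle hk)) hg) (by rw [map_mul, map_inv, hkg, inv_mul_cancel])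
  rwa [← inv_mul_eq_one.mp hkg']

end Extensions

theorem residuallyFinite_mod_d_general (Γt Γ : Type*) [Group Γt] [Group Γ] [Group.FG Γ]
    (hΓRF : ResiduallyFinite Γ)
    (π : Γt →* Γ) (hπ : Function.Surjective π)
    (σ : Γt)
    (hker : π.ker = Subgroup.zpowers σ)
    (N : Type*) [Group N] [Group.IsNilpotent N]
    (ρ : Γt →* N) (hρ : Function.Surjective ρ)
    (hinj : ∀ k : ℤ, ρ (σ ^ k) = 1 → σ ^ k = 1) :
    ∀ (d : ℕ) (Γd : Type*) [Group Γd] (q : Γt →* Γd),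
      Function.Surjective q → q.ker = Subgroup.zpowers (σ ^ d) →
      ResiduallyFinite Γd := by
  intro d Γd _ q hq hkq
  rw [residuallyFinite_iff_group_residuallyFinite] at hΓRF ⊢
  have : Group.FG Γt :=
    Group.fg_of_surjective_of_ker_fg hπ ⟨{σ}, by simp [hker, zpowers_eq_closure]⟩
  have : Group.FG N := Group.fg_of_surjective hρ
  have hle : q.ker ≤ π.ker := by
    rw [hkq, hker]
    exact zpowers_le.mpr (pow_mem (mem_zpowers σ) d)
  refine Group.ResiduallyFinite.of_surjective_of_ker_le hq π hρ hle ?_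
  rw [hker]
  rintro _ ⟨k, rfl⟩
  exact hinj k

/-- Let `Γ` be finitely generated and residually finite and let
`1 → ℤ → Γ̃ → Γ → 1` be a central exact sequence with kernel generated by a
central element `σ` of infinite order.  For `d ∈ ℕ`, let `Γ_d` be the quotient
`Γ̃/⟨σ^d⟩`, a central extension of `Γ` by `ℤ/d`.  If there is a nilpotent
quotient of `Γ̃` that is injective on `⟨σ⟩`, then `Γ_d` is residually finite for
every `d`. -/
theorem residuallyFinite_mod_d (Γt Γ : Type*) [Group Γt] [Group Γ] [Group.FG Γ]
    (hΓRF : ResiduallyFinite Γ)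
    (π : Γt →* Γ) (hπ : Function.Surjective π)
    (σ : Γt) (hσc : σ ∈ Subgroup.center Γt) (hσinf : ¬ IsOfFinOrder σ)
    (hker : π.ker = Subgroup.zpowers σ)
    (N : Type*) [Group N] [Group.IsNilpotent N]
    (ρ : Γt →* N) (hρ : Function.Surjective ρ)
    (hinj : ∀ k : ℤ, ρ (σ ^ k) = 1 → σ ^ k = 1) :
    ∀ (d : ℕ) (Γd : Type*) [Group Γd] (q : Γt →* Γd),
      Function.Surjective q → q.ker = Subgroup.zpowers (σ ^ d) →
      ResiduallyFinite Γd :=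
  residuallyFinite_mod_d_general Γt Γ hΓRF π hπ σ hker N ρ hρ hinj
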